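/- Let $\phi \in GL^\infty(\mathbb{T})$ and suppose $F = \phi\,\tilde\phi^{-1}$ admits a weak antisymmetric factorization $F = \phi_- t^{2\kappa}\tilde\phi_-^{-1}$ in $L^p$. Then $\phi_0 := t^{-\kappa}\phi_-^{-1}\phi$ is an even function, $|1-t|\phi_0 \in L^q(\mathbb{T})$, $|1+t|\phi_0^{-1} \in L^p(\mathbb{T})$, and $\phi = \phi_- t^{\kappa}\phi_0$ is a weak asymmetric factorization of $\phi$. -/

import Mathlib

open MeasureTheory Complex Real
open scoped ENNReal
noncomputable section
namespace TH

abbrev Tp : ℝ := 2 * Real.pi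
instance : Fact (0 < Tp) := ⟨by positivity⟩
abbrev 𝕋 := AddCircle Tp
abbrev μ : Measure 𝕋 := AddCircle.haarAddCircle

/-- Invertibility in `L^∞(𝕋)`. -/
def GLinf (φ : 𝕋 → ℂ) : Prop :=
  MemLp φ ⊤ μ ∧ MemLp (fun x => (φ x)⁻¹) ⊤ μ ∧ ∀ᵐ x ∂μ, φ x ≠ 0

/-- The function `t ↦ 1 + t⁻¹` on the circle. -/
def onePlusTInv (x : 𝕋) : ℂ := 1 + fourier (-1) x
/-- The function `t ↦ 1 - t⁻¹` on the circle. -/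
def oneMinusTInv (x : 𝕋) : ℂ := 1 - fourier (-1) x
/-- The function `t ↦ |1 - t|` on the circle. -/
def absOneMinusT (x : 𝕋) : ℂ := ((‖1 - fourier 1 x‖ : ℝ) : ℂ)
/-- The function `t ↦ |1 + t|` on the circle. -/
def absOnePlusT (x : 𝕋) : ℂ := ((‖1 + fourier 1 x‖ : ℝ) : ℂ)
/-- Evenness (a.e.): `f(t⁻¹) = f(t)`. -/
def evenAE (f : 𝕋 → ℂ) : Prop := ∀ᵐ x ∂μ, f (-x) = f x

/-- `φ = φ₋ tᵏ φ₀` is a weak asymmetric factorization in `L^p(𝕋)`: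
`(1+t⁻¹)φ₋ ∈ H^p-bar`, `(1-t⁻¹)φ₋⁻¹ ∈ H^q-bar`, `|1-t|φ₀ ∈ L^q` even,
`|1+t|φ₀⁻¹ ∈ L^p` even. -/
def WeakAsymFactor (p q : ℝ≥0∞) (φ φm φ0 : 𝕋 → ℂ) (κ : ℤ) : Prop :=
  (∀ᵐ x ∂μ, φ x = φm x * fourier κ x * φ0 x) ∧
  MemLp (fun x => onePlusTInv x * φm x) p μ ∧
  (∀ n : ℤ, 0 < n → fourierCoeff (fun x => onePlusTInv x * φm x) n = 0) ∧
  MemLp (fun x => oneMinusTInv x * (φm x)⁻¹) q μ ∧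
  (∀ n : ℤ, 0 < n → fourierCoeff (fun x => oneMinusTInv x * (φm x)⁻¹) n = 0) ∧
  MemLp (fun x => absOneMinusT x * φ0 x) q μ ∧
  MemLp (fun x => absOnePlusT x * (φ0 x)⁻¹) p μ ∧
  evenAE φ0

/-- `F = φ₋ t^{2κ} (φ₋~)⁻¹` is a weak antisymmetric factorization in `L^p(𝕋)`:
`(1+t⁻¹)φ₋ ∈ H^p-bar` and `(1-t⁻¹)φ₋⁻¹ ∈ H^q-bar`. -/
def WeakAntisymFactor (p q : ℝ≥0∞) (F φm : 𝕋 → ℂ) (κ : ℤ) : Prop :=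
  (∀ᵐ x ∂μ, F x = φm x * fourier (2 * κ) x * (φm (-x))⁻¹) ∧
  MemLp (fun x => onePlusTInv x * φm x) p μ ∧
  (∀ n : ℤ, 0 < n → fourierCoeff (fun x => onePlusTInv x * φm x) n = 0) ∧
  MemLp (fun x => oneMinusTInv x * (φm x)⁻¹) q μ ∧
  (∀ n : ℤ, 0 < n → fourierCoeff (fun x => oneMinusTInv x * (φm x)⁻¹) n = 0)

/-! On the circle `|1 - t| = |1 - t⁻¹|` and `|1 + t| = |1 + t⁻¹|`, so `|1 - t| φ₀` is, up to a
factor of modulus at most one, the product of `φ ∈ L^∞` with `(1 - t⁻¹) φ₋⁻¹ ∈ L^q`; likewise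
`|1 + t| φ₀⁻¹` is `φ⁻¹ ∈ L^∞` times `(1 + t⁻¹) φ₋ ∈ L^p`. Evenness of `φ₀` is a pointwise
computation from `φ φ~⁻¹ = φ₋ t^{2κ} φ₋~⁻¹`. -/

lemma fourier_apply_neg {T : ℝ} (n : ℤ) (x : AddCircle T) : fourier n (-x) = fourier (-n) x := by
  rw [fourier_apply, fourier_apply, smul_neg, ← neg_smul]

lemma fourier_mul_fourier_neg {T : ℝ} (n : ℤ) (x : AddCircle T) :
    fourier n x * fourier (-n) x = 1 := by
  rw [← fourier_add, add_neg_cancel, fourier_zero]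

lemma memLp_top_fourier {T : ℝ} [Fact (0 < T)] (μ : Measure (AddCircle T)) (n : ℤ) :
    MemLp (fourier n ·) ∞ μ :=
  (BoundedContinuousFunction.mkOfCompact (fourier n)).memLp_top

lemma continuous_oneMinusTInv : Continuous oneMinusTInv :=
  continuous_const.sub (fourier (-1)).continuous

lemma continuous_onePlusTInv : Continuous onePlusTInv :=
  continuous_const.add (fourier (-1)).continuous

lemma absOneMinusT_eq_norm_oneMinusTInv (x : 𝕋) :
    absOneMinusT x = ((‖oneMinusTInv x‖ : ℝ) : ℂ) := by
  rw [absOneMinusT, oneMinusTInv, fourier_neg, ← Complex.norm_conj, map_sub, map_one]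

lemma absOnePlusT_eq_norm_onePlusTInv (x : 𝕋) :
    absOnePlusT x = ((‖onePlusTInv x‖ : ℝ) : ℂ) := by
  rw [absOnePlusT, onePlusTInv, fourier_neg, ← Complex.norm_conj, map_add, map_one]

lemma norm_ofReal_norm_mul_inv_le_one (b : ℂ) : ‖((‖b‖ : ℝ) : ℂ) * b⁻¹‖ ≤ 1 := by
  rcases eq_or_ne b 0 with rfl | hb
  · simp
  · simp [hb]

lemma ofReal_norm_mul_eq (b u y : ℂ) :
    ((‖b‖ : ℝ) : ℂ) * (u * y) = ((‖b‖ : ℝ) : ℂ) * b⁻¹ * u * (b * y) := by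
  rcases eq_or_ne b 0 with rfl | hb
  · simp
  · field_simp

/-- `‖b‖ = (‖b‖ b⁻¹) b` also where `b` vanishes (both sides are `0` there, as `0⁻¹ = 0`), and the
factor `‖b‖ b⁻¹` is bounded by one. -/
lemma _root_.MeasureTheory.MemLp.ofReal_norm_mul {α : Type*} {m : MeasurableSpace α}
    {μ : Measure α} {r : ℝ≥0∞} {b u y : α → ℂ} (hby : MemLp (fun x => b x * y x) r μ)
    (hb : AEStronglyMeasurable b μ) (hu : MemLp u ∞ μ) :
    MemLp (fun x => ((‖b x‖ : ℝ) : ℂ) * (u x * y x)) r μ := by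
  have hphase : MemLp (fun x => ((‖b x‖ : ℝ) : ℂ) * (b x)⁻¹) ∞ μ :=
    memLp_top_of_bound
      ((Complex.continuous_ofReal.comp_aestronglyMeasurable hb.norm).mul
        hb.aemeasurable.inv.aestronglyMeasurable) 1
      (ae_of_all _ fun x => norm_ofReal_norm_mul_inv_le_one (b x))
  simpa only [← ofReal_norm_mul_eq] using hby.mul' (hu.mul' hphase (r := ∞))

lemma memLp_absOneMinusT_mul {r : ℝ≥0∞} {u y : 𝕋 → ℂ}
    (hy : MemLp (fun x => oneMinusTInv x * y x) r μ) (hu : MemLp u ∞ μ) :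
    MemLp (fun x => absOneMinusT x * (u x * y x)) r μ := by
  simpa only [absOneMinusT_eq_norm_oneMinusTInv] using
    hy.ofReal_norm_mul continuous_oneMinusTInv.aestronglyMeasurable hu

lemma memLp_absOnePlusT_mul {r : ℝ≥0∞} {u y : 𝕋 → ℂ}
    (hy : MemLp (fun x => onePlusTInv x * y x) r μ) (hu : MemLp u ∞ μ) :
    MemLp (fun x => absOnePlusT x * (u x * y x)) r μ := by
  simpa only [absOnePlusT_eq_norm_onePlusTInv] using
    hy.ofReal_norm_mul continuous_onePlusTInv.aestronglyMeasurable hu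

lemma ne_zero_of_mul_inv_eq_mul_mul_inv {G₀ : Type*} [GroupWithZero G₀] {a b m e n : G₀}
    (ha : a ≠ 0) (hb : b ≠ 0) (h : a * b⁻¹ = m * e * n⁻¹) : m ≠ 0 ∧ n ≠ 0 := by
  have hmen : m * e * n⁻¹ ≠ 0 := h ▸ mul_ne_zero ha (inv_ne_zero hb)
  exact ⟨left_ne_zero_of_mul (left_ne_zero_of_mul hmen), by simpa using right_ne_zero_of_mul hmen⟩

section AntisymFactor

variable {φ φm : 𝕋 → ℂ} {κ : ℤ}

lemma ae_ne_zero_of_antisymFactor (hφ : ∀ᵐ x ∂μ, φ x ≠ 0)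
    (hF : ∀ᵐ x ∂μ, φ x * (φ (-x))⁻¹ = φm x * fourier (2 * κ) x * (φm (-x))⁻¹) :
    ∀ᵐ x ∂μ, φ (-x) ≠ 0 ∧ φm x ≠ 0 ∧ φm (-x) ≠ 0 := by
  have hφ_neg : ∀ᵐ x ∂μ, φ (-x) ≠ 0 :=
    (Measure.measurePreserving_neg μ).quasiMeasurePreserving.ae (p := (φ · ≠ 0)) hφ
  filter_upwards [hφ, hφ_neg, hF] with x h0 h1 hFx
  exact ⟨h1, ne_zero_of_mul_inv_eq_mul_mul_inv h0 h1 hFx⟩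

lemma ae_eq_mul_fourier_mul_of_antisymFactor (hφ : ∀ᵐ x ∂μ, φ x ≠ 0)
    (hF : ∀ᵐ x ∂μ, φ x * (φ (-x))⁻¹ = φm x * fourier (2 * κ) x * (φm (-x))⁻¹) :
    ∀ᵐ x ∂μ, φ x = φm x * fourier κ x * (fourier (-κ) x * (φm x)⁻¹ * φ x) := by
  filter_upwards [ae_ne_zero_of_antisymFactor hφ hF] with x ⟨_, hm, _⟩
  calc φ x = fourier κ x * fourier (-κ) x * (φm x * (φm x)⁻¹) * φ x := by
        rw [fourier_mul_fourier_neg, mul_inv_cancel₀ hm, one_mul, one_mul]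
    _ = _ := by ring

lemma evenAE_of_antisymFactor (hφ : ∀ᵐ x ∂μ, φ x ≠ 0)
    (hF : ∀ᵐ x ∂μ, φ x * (φ (-x))⁻¹ = φm x * fourier (2 * κ) x * (φm (-x))⁻¹) :
    evenAE (fun x => fourier (-κ) x * (φm x)⁻¹ * φ x) := by
  filter_upwards [ae_ne_zero_of_antisymFactor hφ hF, hF] with x ⟨hφ_neg, hm, hm_neg⟩ hFx
  have hsq : fourier (2 * κ) x = fourier κ x * fourier κ x := by rw [two_mul, fourier_add]
  simp only [fourier_apply_neg, neg_neg,
    ← inv_eq_of_mul_eq_one_right (fourier_mul_fourier_neg κ x)]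
  rw [hsq] at hFx
  field_simp at hFx ⊢
  linear_combination -hFx

end AntisymFactor

theorem stmt_16_general (p q : ℝ)
    (φ φm : 𝕋 → ℂ) (κ : ℤ) (hφ : GLinf φ)
    (h : WeakAntisymFactor (ENNReal.ofReal p) (ENNReal.ofReal q)
      (fun x => φ x * (φ (-x))⁻¹) φm κ) :
    WeakAsymFactor (ENNReal.ofReal p) (ENNReal.ofReal q) φ φm
      (fun x => fourier (-κ) x * (φm x)⁻¹ * φ x) κ := by
  obtain ⟨hF, hm_mem, hm_coeff, hminv_mem, hminv_coeff⟩ := h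
  obtain ⟨hφ_top, hφinv_top, hφ_ne⟩ := hφ
  refine ⟨ae_eq_mul_fourier_mul_of_antisymFactor hφ_ne hF, hm_mem, hm_coeff, hminv_mem,
    hminv_coeff, ?_, ?_, evenAE_of_antisymFactor hφ_ne hF⟩
  · convert memLp_absOneMinusT_mul hminv_mem
      ((memLp_top_fourier μ (-κ)).mul' hφ_top (r := ∞)) using 3 with x
    ring
  · convert memLp_absOnePlusT_mul hm_mem
      ((memLp_top_fourier μ κ).mul' hφinv_top (r := ∞)) using 3 with x
    rw [mul_inv, mul_inv, inv_inv, inv_eq_of_mul_eq_one_left (fourier_mul_fourier_neg κ x)]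
    ring

/-- If `F = φ φ~⁻¹` admits a weak antisymmetric factorization `F = φ₋ t^{2κ} (φ₋~)⁻¹`, then
with `φ₀ := t^{-κ} φ₋⁻¹ φ`, the product `φ = φ₋ tᵏ φ₀` is a weak asymmetric factorization:
`φ₀` is even, `|1-t|φ₀ ∈ L^q` and `|1+t|φ₀⁻¹ ∈ L^p`. -/
theorem stmt_16 (p q : ℝ) (hpq : p.HolderConjugate q)
    (φ φm : 𝕋 → ℂ) (κ : ℤ) (hφ : GLinf φ)
    (h : WeakAntisymFactor (ENNReal.ofReal p) (ENNReal.ofReal q)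
      (fun x => φ x * (φ (-x))⁻¹) φm κ) :
    WeakAsymFactor (ENNReal.ofReal p) (ENNReal.ofReal q) φ φm
      (fun x => fourier (-κ) x * (φm x)⁻¹ * φ x) κ :=
  stmt_16_general p q φ φm κ hφ h

end TH
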